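/- arXiv:math/0307233 — 2 statements merged into one kernel-verified Lean document; each statement's English description precedes it below -/
import Mathlib

section
/- Let F(X) be a free group freely generated by a set X, let Y = {gxg^{−1} : g ∈ F(X), x ∈ X}, let F⁺(Y) be the free monoid freely generated by Y, and let ν: F⁺(Y) → ℤ[F(X)] be the monoid homomorphism into the multiplicative monoid of the group ring ℤ[F(X)] defined by ν(y) = y − 1 for all y ∈ Y. Then ν is injective. -/
/-! Common definitions: surface braid groups, singular braid monoids, graph monoids. -/

/-- `prodAsc f i j = f i * f (i+1) * ⋯ * f j` (equal to `1` when `j < i`). -/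
def prodAsc {M : Type*} [Monoid M] (f : ℕ → M) (i j : ℕ) : M :=
  ((List.range' i (j + 1 - i)).map f).prod

/-- `prodDesc f i j = f i * f (i-1) * ⋯ * f j` (equal to `1` when `i < j`). -/
def prodDesc {M : Type*} [Monoid M] (f : ℕ → M) (i j : ℕ) : M :=
  (((List.range' j (i + 1 - j)).map f).reverse).prod

/-- Generators of the braid group `B_n(M)` of a closed oriented surface of genus `g`:
`σ_1, …, σ_{n-1}` and `a_1, …, a_{2g}` (`s ⟨i-1, _⟩` encodes `σ_i`, `a ⟨k-1, _⟩` encodes `a_k`). -/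
inductive BGen (n g : ℕ) : Type
  | s : Fin (n - 1) → BGen n g
  | a : Fin (2 * g) → BGen n g

/-- The word `σ_i` (1-based index) in the free group. -/
def bS (n g : ℕ) (i : ℕ) : FreeGroup (BGen n g) :=
  if h : i - 1 < n - 1 then FreeGroup.of (BGen.s ⟨i - 1, h⟩) else 1

/-- The word `a_k` (1-based index) in the free group. -/
def bA (n g : ℕ) (k : ℕ) : FreeGroup (BGen n g) :=
  if h : k - 1 < 2 * g then FreeGroup.of (BGen.a ⟨k - 1, h⟩) else 1

/-- The word `A_{2r} = σ_1⁻¹ (a_1 ⋯ a_{r-1} a_{r+1}⁻¹ ⋯ a_{2g}⁻¹) σ_1⁻¹`. -/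
def bA2 (n g : ℕ) (r : ℕ) : FreeGroup (BGen n g) :=
  (bS n g 1)⁻¹ * prodAsc (bA n g) 1 (r - 1) *
    prodAsc (fun k => (bA n g k)⁻¹) (r + 1) (2 * g) * (bS n g 1)⁻¹

/-- The relators (R1)–(R6) of the braid group of a closed oriented surface of genus `g`. -/
def Brel (n g : ℕ) : Set (FreeGroup (BGen n g)) :=
  { w |
    -- (R1)
    (∃ i j, 1 ≤ i ∧ i ≤ n - 1 ∧ 1 ≤ j ∧ j ≤ n - 1 ∧ (i + 2 ≤ j ∨ j + 2 ≤ i) ∧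
      w = bS n g i * bS n g j * (bS n g j * bS n g i)⁻¹) ∨
    -- (R2)
    (∃ i, 1 ≤ i ∧ i + 1 ≤ n - 1 ∧
      w = bS n g i * bS n g (i + 1) * bS n g i *
        (bS n g (i + 1) * bS n g i * bS n g (i + 1))⁻¹) ∨
    -- (R3)
    (w = prodAsc (bA n g) 1 (2 * g) * prodAsc (fun k => (bA n g k)⁻¹) 1 (2 * g) *
      (prodAsc (bS n g) 1 (n - 2) * (bS n g (n - 1)) ^ 2 * prodDesc (bS n g) (n - 2) 1)⁻¹) ∨
    -- (R4)
    (∃ r s, 1 ≤ r ∧ r ≤ 2 * g ∧ 1 ≤ s ∧ s ≤ 2 * g ∧ r ≠ s ∧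
      w = bA n g r * bA2 n g s * (bA2 n g s * bA n g r)⁻¹) ∨
    -- (R5)
    (∃ r, 1 ≤ r ∧ r ≤ 2 * g ∧
      w = prodAsc (bA n g) 1 r * bA2 n g r *
        ((bS n g 1) ^ 2 * bA2 n g r * prodAsc (bA n g) 1 r)⁻¹) ∨
    -- (R6)
    (∃ r i, 1 ≤ r ∧ r ≤ 2 * g ∧ 2 ≤ i ∧ i ≤ n - 1 ∧
      w = bA n g r * bS n g i * (bS n g i * bA n g r)⁻¹) }

/-- The braid group `B_n(M)` of the closed oriented surface `M` of genus `g`. -/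
abbrev SurfBraidGroup (n g : ℕ) := PresentedGroup (Brel n g)

/-- The canonical projection from the free group onto `B_n(M)`. -/
def bmk (n g : ℕ) : FreeGroup (BGen n g) →* SurfBraidGroup n g := PresentedGroup.mk (Brel n g)

/-- The generator `σ_i` of `B_n(M)` (1-based index). -/
def Bσ (n g : ℕ) (i : ℕ) : SurfBraidGroup n g := bmk n g (bS n g i)

/-- The generator `a_k` of `B_n(M)` (1-based index). -/
def Ba (n g : ℕ) (k : ℕ) : SurfBraidGroup n g := bmk n g (bA n g k)

/-- `T_{i j} = σ_i ⋯ σ_{j-2} σ_{j-1}² σ_{j-2}⁻¹ ⋯ σ_i⁻¹` in `B_n(M)`. -/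
def bT (n g : ℕ) (i j : ℕ) : SurfBraidGroup n g :=
  bmk n g (prodAsc (bS n g) i (j - 2) * (bS n g (j - 1)) ^ 2 * (prodAsc (bS n g) i (j - 2))⁻¹)

/-- The set `Υ = {β σ_i² β⁻¹ : β ∈ B_n(M), 1 ≤ i ≤ n-1}`. -/
def Ups (n g : ℕ) : Set (SurfBraidGroup n g) :=
  { x | ∃ β : SurfBraidGroup n g, ∃ i : ℕ, 1 ≤ i ∧ i ≤ n - 1 ∧ x = β * (Bσ n g i) ^ 2 * β⁻¹ }

/-- The subgroup `K_n(M)` of `B_n(M)` generated by `Υ`. -/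
def Ksub (n g : ℕ) : Subgroup (SurfBraidGroup n g) := Subgroup.closure (Ups n g)

/-- `θ : B_n(M) → Sym_n` is the standard epimorphism: `θ(σ_i) = (i, i+1)` and `θ(a_k) = 1`
(points of `{1, …, n}` are encoded 0-based in `Fin n`). -/
def IsTheta (n g : ℕ) (θ : SurfBraidGroup n g →* Equiv.Perm (Fin n)) : Prop :=
  (∀ i : ℕ, ∀ _h1 : 1 ≤ i, ∀ _h2 : i ≤ n - 1,
    θ (Bσ n g i) = Equiv.swap ⟨i - 1, by omega⟩ ⟨i, by omega⟩) ∧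
  (∀ k : ℕ, 1 ≤ k → k ≤ 2 * g → θ (Ba n g k) = 1)

/-- The set `Υ_{i j} = {β T_{i j} β⁻¹ : β ∈ PB_n(M)}`, where `PB_n(M) = ker θ`. -/
def UpsIJ (n g : ℕ) (θ : SurfBraidGroup n g →* Equiv.Perm (Fin n)) (i j : ℕ) :
    Set (SurfBraidGroup n g) :=
  { x | ∃ β ∈ θ.ker, x = β * bT n g i j * β⁻¹ }

/-! ### Graph monoids -/

/-- The congruence on the free monoid over the vertex set generated by the relations
`xy = yx` for edges `{x, y}` of the graph (edge relation `E`). -/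
def graphCon {X : Type*} (E : X → X → Prop) : Con (FreeMonoid X) :=
  conGen (fun w₁ w₂ => ∃ x y, E x y ∧ w₁ = FreeMonoid.of x * FreeMonoid.of y ∧
    w₂ = FreeMonoid.of y * FreeMonoid.of x)

/-- The graph monoid `M(Γ)` of a graph with vertex set `X` and edge relation `E`. -/
abbrev GraphMonoid {X : Type*} (E : X → X → Prop) := (graphCon E).Quotient

/-- The vertex `x`, viewed as an element of the graph monoid. -/
def gvert {X : Type*} (E : X → X → Prop) (x : X) : GraphMonoid E :=
  (graphCon E).mk' (FreeMonoid.of x)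

/-- The edge relation of the commutation graph on a subset `S` of a monoid:
`{u, v}` is an edge iff `u ≠ v` and `uv = vu`. -/
def commE {G : Type*} [Monoid G] (S : Set G) (u v : ↥S) : Prop :=
  u ≠ v ∧ (u : G) * v = v * u

/-! ### The singular braid monoid -/

/-- Generators of the singular braid monoid: `σ_i^{±1}`, `a_k^{±1}`, `τ_i` (1-based encoding
as in `BGen`). -/
inductive SGen (n g : ℕ) : Type
  | sp : Fin (n - 1) → SGen n g
  | sm : Fin (n - 1) → SGen n g
  | ap : Fin (2 * g) → SGen n g
  | am : Fin (2 * g) → SGen n g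
  | t : Fin (n - 1) → SGen n g

/-- The letter `σ_i`. -/
def mSp (n g : ℕ) (i : ℕ) : FreeMonoid (SGen n g) :=
  if h : i - 1 < n - 1 then FreeMonoid.of (SGen.sp ⟨i - 1, h⟩) else 1

/-- The letter `σ_i⁻¹`. -/
def mSm (n g : ℕ) (i : ℕ) : FreeMonoid (SGen n g) :=
  if h : i - 1 < n - 1 then FreeMonoid.of (SGen.sm ⟨i - 1, h⟩) else 1

/-- The letter `a_k`. -/
def mAp (n g : ℕ) (k : ℕ) : FreeMonoid (SGen n g) :=
  if h : k - 1 < 2 * g then FreeMonoid.of (SGen.ap ⟨k - 1, h⟩) else 1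

/-- The letter `a_k⁻¹`. -/
def mAm (n g : ℕ) (k : ℕ) : FreeMonoid (SGen n g) :=
  if h : k - 1 < 2 * g then FreeMonoid.of (SGen.am ⟨k - 1, h⟩) else 1

/-- The letter `τ_i`. -/
def mT (n g : ℕ) (i : ℕ) : FreeMonoid (SGen n g) :=
  if h : i - 1 < n - 1 then FreeMonoid.of (SGen.t ⟨i - 1, h⟩) else 1

/-- The word `A_{2r}` in the singular braid generators. -/
def mA2 (n g : ℕ) (r : ℕ) : FreeMonoid (SGen n g) :=
  mSm n g 1 * prodAsc (mAp n g) 1 (r - 1) * prodAsc (mAm n g) (r + 1) (2 * g) * mSm n g 1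

/-- The word `a_{i r}`: `(σ_{i-1}⁻¹ ⋯ σ_1⁻¹) a_r (σ_1⁻¹ ⋯ σ_{i-1}⁻¹)` for odd `r`, and
`(σ_{i-1} ⋯ σ_1) a_r (σ_1 ⋯ σ_{i-1})` for even `r`. -/
def mair (n g : ℕ) (i r : ℕ) : FreeMonoid (SGen n g) :=
  if r % 2 = 1 then prodDesc (mSm n g) (i - 1) 1 * mAp n g r * prodAsc (mSm n g) 1 (i - 1)
  else prodDesc (mSp n g) (i - 1) 1 * mAp n g r * prodAsc (mSp n g) 1 (i - 1)

/-- The word representing `a_{i r}⁻¹`. -/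
def mairInv (n g : ℕ) (i r : ℕ) : FreeMonoid (SGen n g) :=
  if r % 2 = 1 then prodDesc (mSp n g) (i - 1) 1 * mAm n g r * prodAsc (mSp n g) 1 (i - 1)
  else prodDesc (mSm n g) (i - 1) 1 * mAm n g r * prodAsc (mSm n g) 1 (i - 1)

/-- The defining relations (R0)–(R12) of the singular braid monoid `SB_n(M)`. -/
def SBrel (n g : ℕ) : FreeMonoid (SGen n g) → FreeMonoid (SGen n g) → Prop := fun w₁ w₂ =>
  -- (R0)
  (∃ i, 1 ≤ i ∧ i ≤ n - 1 ∧
    (w₁ = mSp n g i * mSm n g i ∨ w₁ = mSm n g i * mSp n g i) ∧ w₂ = 1) ∨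
  (∃ k, 1 ≤ k ∧ k ≤ 2 * g ∧
    (w₁ = mAp n g k * mAm n g k ∨ w₁ = mAm n g k * mAp n g k) ∧ w₂ = 1) ∨
  -- (R1)
  (∃ i j, 1 ≤ i ∧ i ≤ n - 1 ∧ 1 ≤ j ∧ j ≤ n - 1 ∧ (i + 2 ≤ j ∨ j + 2 ≤ i) ∧
    w₁ = mSp n g i * mSp n g j ∧ w₂ = mSp n g j * mSp n g i) ∨
  -- (R2)
  (∃ i, 1 ≤ i ∧ i + 1 ≤ n - 1 ∧
    w₁ = mSp n g i * mSp n g (i + 1) * mSp n g i ∧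
    w₂ = mSp n g (i + 1) * mSp n g i * mSp n g (i + 1)) ∨
  -- (R3)
  (w₁ = prodAsc (mAp n g) 1 (2 * g) * prodAsc (mAm n g) 1 (2 * g) ∧
    w₂ = prodAsc (mSp n g) 1 (n - 2) * mSp n g (n - 1) * mSp n g (n - 1) *
      prodDesc (mSp n g) (n - 2) 1) ∨
  -- (R4)
  (∃ r s, 1 ≤ r ∧ r ≤ 2 * g ∧ 1 ≤ s ∧ s ≤ 2 * g ∧ r ≠ s ∧
    w₁ = mAp n g r * mA2 n g s ∧ w₂ = mA2 n g s * mAp n g r) ∨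
  -- (R5)
  (∃ r, 1 ≤ r ∧ r ≤ 2 * g ∧
    w₁ = prodAsc (mAp n g) 1 r * mA2 n g r ∧
    w₂ = mSp n g 1 * mSp n g 1 * mA2 n g r * prodAsc (mAp n g) 1 r) ∨
  -- (R6)
  (∃ r i, 1 ≤ r ∧ r ≤ 2 * g ∧ 2 ≤ i ∧ i ≤ n - 1 ∧
    w₁ = mAp n g r * mSp n g i ∧ w₂ = mSp n g i * mAp n g r) ∨
  -- (R7)
  (∃ i j, 1 ≤ i ∧ i ≤ n - 1 ∧ 1 ≤ j ∧ j ≤ n - 1 ∧ (i + 2 ≤ j ∨ j + 2 ≤ i) ∧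
    w₁ = mSp n g i * mT n g j ∧ w₂ = mT n g j * mSp n g i) ∨
  -- (R8)
  (∃ i j, 1 ≤ i ∧ i ≤ n - 1 ∧ 1 ≤ j ∧ j ≤ n - 1 ∧ (i + 2 ≤ j ∨ j + 2 ≤ i) ∧
    w₁ = mT n g i * mT n g j ∧ w₂ = mT n g j * mT n g i) ∨
  -- (R9)
  (∃ i, 1 ≤ i ∧ i ≤ n - 1 ∧
    w₁ = mSp n g i * mT n g i ∧ w₂ = mT n g i * mSp n g i) ∨
  -- (R10)
  (∃ i j, 1 ≤ i ∧ i ≤ n - 1 ∧ 1 ≤ j ∧ j ≤ n - 1 ∧ (i + 1 = j ∨ j + 1 = i) ∧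
    w₁ = mSp n g i * mSp n g j * mT n g i ∧ w₂ = mT n g j * mSp n g i * mSp n g j) ∨
  -- (R11)
  (∃ i r, 1 ≤ i ∧ i ≤ n - 1 ∧ 1 ≤ r ∧ r ≤ 2 * g ∧
    w₁ = mair n g i r * mair n g (i + 1) r * mT n g i *
      (mairInv n g (i + 1) r * mairInv n g i r) ∧
    w₂ = mT n g i) ∨
  -- (R12)
  (∃ i j r, 1 ≤ i ∧ i ≤ n - 1 ∧ 1 ≤ j ∧ j ≤ n ∧ j ≠ i ∧ j ≠ i + 1 ∧ 1 ≤ r ∧ r ≤ 2 * g ∧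
    w₁ = mT n g i * mair n g j r ∧ w₂ = mair n g j r * mT n g i)

/-- The singular braid monoid `SB_n(M)`. -/
abbrev SingBraidMonoid (n g : ℕ) := (conGen (SBrel n g)).Quotient

/-- The canonical projection from the free monoid onto `SB_n(M)`. -/
def smk (n g : ℕ) : FreeMonoid (SGen n g) →* SingBraidMonoid n g := Con.mk' _

/-- The generator `σ_i` of `SB_n(M)`. -/
def sσ (n g : ℕ) (i : ℕ) : SingBraidMonoid n g := smk n g (mSp n g i)

/-- The generator `σ_i⁻¹` of `SB_n(M)`. -/
def sσi (n g : ℕ) (i : ℕ) : SingBraidMonoid n g := smk n g (mSm n g i)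

/-- The generator `a_k` of `SB_n(M)`. -/
def sa (n g : ℕ) (k : ℕ) : SingBraidMonoid n g := smk n g (mAp n g k)

/-- The generator `a_k⁻¹` of `SB_n(M)`. -/
def sai (n g : ℕ) (k : ℕ) : SingBraidMonoid n g := smk n g (mAm n g k)

/-- The generator `τ_i` of `SB_n(M)`. -/
def sτ (n g : ℕ) (i : ℕ) : SingBraidMonoid n g := smk n g (mT n g i)

/-- `δ_i = σ_i τ_i` in `SB_n(M)`. -/
def sδ (n g : ℕ) (i : ℕ) : SingBraidMonoid n g := sσ n g i * sτ n g i

/-- `ι : B_n(M) → SB_n(M)` is the canonical monoid homomorphism sending `σ_i^{±1}` to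
`σ_i^{±1}` and `a_k^{±1}` to `a_k^{±1}`. -/
def IsIota (n g : ℕ) (ι : SurfBraidGroup n g →* SingBraidMonoid n g) : Prop :=
  (∀ i, 1 ≤ i → i ≤ n - 1 → ι (Bσ n g i) = sσ n g i ∧ ι ((Bσ n g i)⁻¹) = sσi n g i) ∧
  (∀ k, 1 ≤ k → k ≤ 2 * g → ι (Ba n g k) = sa n g k ∧ ι ((Ba n g k)⁻¹) = sai n g k)

/-- The set `Υ̂ = {ι(α) δ_i ι(α)⁻¹ : α ∈ B_n(M), 1 ≤ i ≤ n-1} ⊆ SB_n(M)`. -/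
def UpsHat (n g : ℕ) (ι : SurfBraidGroup n g →* SingBraidMonoid n g) :
    Set (SingBraidMonoid n g) :=
  { x | ∃ α : SurfBraidGroup n g, ∃ i : ℕ, 1 ≤ i ∧ i ≤ n - 1 ∧
      x = ι α * sδ n g i * ι α⁻¹ }

/-- The defining property of the desingularization map
`η : SB_n(M) → ℤ[B_n(M)]`: `η(σ_i^{±1}) = σ_i^{±1}`, `η(a_k^{±1}) = a_k^{±1}`,
`η(τ_i) = σ_i - σ_i⁻¹`. -/
def IsEta (n g : ℕ) (η : SingBraidMonoid n g →* MonoidAlgebra ℤ (SurfBraidGroup n g)) : Prop :=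
  (∀ i, 1 ≤ i → i ≤ n - 1 →
    η (sσ n g i) = MonoidAlgebra.of ℤ (SurfBraidGroup n g) (Bσ n g i) ∧
    η (sσi n g i) = MonoidAlgebra.of ℤ (SurfBraidGroup n g) ((Bσ n g i)⁻¹)) ∧
  (∀ k, 1 ≤ k → k ≤ 2 * g →
    η (sa n g k) = MonoidAlgebra.of ℤ (SurfBraidGroup n g) (Ba n g k) ∧
    η (sai n g k) = MonoidAlgebra.of ℤ (SurfBraidGroup n g) ((Ba n g k)⁻¹)) ∧
  (∀ i, 1 ≤ i → i ≤ n - 1 →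
    η (sτ n g i) = MonoidAlgebra.of ℤ (SurfBraidGroup n g) (Bσ n g i) -
      MonoidAlgebra.of ℤ (SurfBraidGroup n g) ((Bσ n g i)⁻¹))

/-- The defining property of `ν : M(Ω) → ℤ[K_n(M)]`: `ν(u) = u - 1` for every vertex `u ∈ Υ`. -/
def IsNu (n g : ℕ)
    (ν : GraphMonoid (commE (Ups n g)) →* MonoidAlgebra ℤ ↥(Ksub n g)) : Prop :=
  ∀ u : ↥(Ups n g),
    ν (gvert (commE (Ups n g)) u) =
      MonoidAlgebra.of ℤ ↥(Ksub n g) ⟨u.1, Subgroup.subset_closure u.2⟩ - 1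

/-- Every element of `Υ_{i j}` lies in `Υ`. -/
theorem upsIJ_subset_Ups (n g : ℕ) (θ : SurfBraidGroup n g →* Equiv.Perm (Fin n))
    (i j : ℕ) (h1 : 1 ≤ i) (h2 : i < j) (h3 : j ≤ n) (hn : 2 ≤ n) :
    UpsIJ n g θ i j ⊆ Ups n g := by
  rintro x ⟨β, _hβ, rfl⟩
  refine ⟨β * bmk n g (prodAsc (bS n g) i (j - 2)), j - 1, by omega, by omega, ?_⟩
  simp only [bT, Bσ, map_mul, map_pow, map_inv, mul_inv_rev]
  group

/-- Every element of `Υ_{i j}` lies in `K_n(M)`. -/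
theorem upsIJ_subset_Ksub (n g : ℕ) (θ : SurfBraidGroup n g →* Equiv.Perm (Fin n))
    (i j : ℕ) (h1 : 1 ≤ i) (h2 : i < j) (h3 : j ≤ n) (hn : 2 ≤ n) :
    ∀ u ∈ UpsIJ n g θ i j, u ∈ Ksub n g := fun _ hu =>
  Subgroup.subset_closure (upsIJ_subset_Ups n g θ i j h1 h2 h3 hn hu)

/-- The canonical monoid homomorphism out of a graph monoid induced by a map on vertices
whose values pairwise commute along edges. -/
def gmLift {X M : Type*} [Monoid M] (E : X → X → Prop) (f : X → M)
    (h : ∀ x y, E x y → f x * f y = f y * f x) : GraphMonoid E →* M :=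
  Con.lift _ (FreeMonoid.lift f) (by
    refine Con.conGen_le.mpr ?_
    rintro w₁ w₂ ⟨x, y, hxy, rfl, rfl⟩
    show FreeMonoid.lift f _ = FreeMonoid.lift f _
    simp only [map_mul, FreeMonoid.lift_eval_of]
    exact h x y hxy)

/-! Peel off the last factor. For `a ∈ Y`, collecting coefficients along the left cosets of
`⟨a⟩` gives an additive map `π_a : ℤ[F] → ℤ[F/⟨a⟩]` (`cosetSum`) that kills `ℤ[F] (a - 1)` and is
`F`-equivariant. For `b ≠ a` in `Y`, `π_a (b - 1) = [b] - [1]` is nonzero of total degree `0`,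
and left multiplication by `c - 1`, `c ∈ Y`, preserves this: an invariant finitely supported
function lives on periodic cosets, and `c` has at most one of them, since the centralizer of an
element of `Y` is the cyclic group it generates and roots in `F` are unique. So `ν w` determines
the last letter of `w`, and as `a - 1` is a right non-zero-divisor (`a` has infinite order),
induction on the length of `w` concludes. -/

open Function

theorem FreeMonoid.inductionOn_mul_of {α : Type*} {motive : FreeMonoid α → Prop}
    (w : FreeMonoid α) (one : motive 1) (mul_of : ∀ w a, motive w → motive (w * of a)) :
    motive w := by
  obtain ⟨l, rfl⟩ := FreeMonoid.ofList.surjective w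
  induction l using List.reverseRecOn with
  | nil => exact one
  | append_singleton l a ih => simpa using mul_of _ a ih

namespace Finsupp

variable {α M : Type*} [AddCommMonoid M] {σ : α → α} {f : α →₀ M}

theorem mem_periodicPts_of_mapDomain_eq (hσ : Injective σ) (hf : f.mapDomain σ = f) {a : α}
    (ha : a ∈ f.support) : a ∈ periodicPts σ := by
  have hmaps : Set.MapsTo σ f.support f.support := fun b hb => by
    rw [Finset.mem_coe, mem_support_iff, ← hf, mapDomain_apply hσ]
    exact mem_support_iff.mp hb
  have hper := (hmaps.restrict_inj.mpr hσ.injOn).mem_periodicPts ⟨a, ha⟩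
  exact (Semiconj.mapsTo_periodicPts (g := Subtype.val) fun _ => rfl) hper

theorem mapDomain_ne_of_periodicPts_subsingleton (hσ : Injective σ)
    (hper : (periodicPts σ).Subsingleton) (hf : f ≠ 0) (hdeg : f.degree = 0) :
    f.mapDomain σ ≠ f := by
  intro hfix
  obtain ⟨a, ha⟩ := support_nonempty_iff.mpr hf
  have hsingle : f = single a (f a) := by
    refine (eq_single_iff.mpr ⟨fun b hb => ?_, rfl⟩)
    exact hper (mem_periodicPts_of_mapDomain_eq hσ hfix hb)
      (mem_periodicPts_of_mapDomain_eq hσ hfix ha) ▸ Finset.mem_singleton_self _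
  rw [hsingle, degree_single] at hdeg
  exact mem_support_iff.mp ha hdeg

end Finsupp

namespace MonoidAlgebra

variable {k G : Type*} [Group G]

section Semiring

variable [Semiring k]

noncomputable def cosetSum (H : Subgroup G) : k[G] →+ (G ⧸ H →₀ k) :=
  (Finsupp.mapDomain.addMonoidHom (↑)).comp coeffAddEquiv.toAddMonoidHom

variable {H : Subgroup G}

@[simp]
theorem cosetSum_single (g : G) (r : k) :
    cosetSum H (single g r) = Finsupp.single (g : G ⧸ H) r :=
  Finsupp.mapDomain_single

theorem cosetSum_mul_single_of_mem (P : k[G]) {h : G} (hh : h ∈ H) :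
    cosetSum H (P * single h 1) = cosetSum H P := by
  induction P using MonoidAlgebra.induction_linear with
  | zero => simp
  | add P Q hP hQ => rw [add_mul, map_add, map_add, hP, hQ]
  | single g r => rw [single_mul_single, mul_one, cosetSum_single, cosetSum_single,
      QuotientGroup.mk_mul_of_mem g hh]

theorem cosetSum_single_mul (g : G) (P : k[G]) :
    cosetSum H (single g 1 * P) = (cosetSum H P).mapDomain (g • ·) := by
  induction P using MonoidAlgebra.induction_linear with
  | zero => simp
  | add P Q hP hQ => rw [mul_add, map_add, map_add, hP, hQ, Finsupp.mapDomain_add]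
  | single p r => rw [single_mul_single, one_mul, cosetSum_single, cosetSum_single,
      Finsupp.mapDomain_single]; rfl

theorem coeff_mul_single_one_eq_mapDomain (P : k[G]) (a : G) :
    (P * single a 1).coeff = P.coeff.mapDomain (· * a) := by
  induction P using MonoidAlgebra.induction_linear with
  | zero => simp
  | add P Q hP hQ => rw [add_mul, coeff_add, coeff_add, hP, hQ, Finsupp.mapDomain_add]
  | single g r => rw [single_mul_single, mul_one, coeff_single, coeff_single,
      Finsupp.mapDomain_single]

end Semiring

variable [Ring k]

theorem isRightRegular_single_sub_one {a : G} (ha : ¬IsOfFinOrder a) :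
    IsRightRegular (single a 1 - 1 : k[G]) := by
  refine isRightRegular_of_non_zero_divisor _ fun P hP => ?_
  rw [mul_sub, mul_one, sub_eq_zero] at hP
  by_contra hP0
  obtain ⟨g, hg⟩ := Finsupp.support_nonempty_iff.mpr (coeff_eq_zero.not.mpr hP0)
  obtain ⟨n, hn, hper⟩ := Finsupp.mem_periodicPts_of_mapDomain_eq (mul_left_injective a)
    (by rw [← coeff_mul_single_one_eq_mapDomain, hP]) hg
  refine ha (isOfFinOrder_iff_pow_eq_one.mpr ⟨n, hn, ?_⟩)
  simpa [IsPeriodicPt, IsFixedPt, mul_right_iterate] using hper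

theorem cosetSum_mul_single_sub_one_of_mem (P : k[G]) {h : G} (hh : h ∈ H) :
    cosetSum H (P * (single h 1 - 1)) = 0 := by
  rw [mul_sub, mul_one, map_sub, cosetSum_mul_single_of_mem P hh, sub_self]

theorem degree_cosetSum_single_sub_one_mul (c : G) (P : k[G]) :
    (cosetSum H ((single c 1 - 1) * P)).degree = 0 := by
  rw [sub_mul, one_mul, map_sub, cosetSum_single_mul, map_sub, Finsupp.degree_mapDomain,
    sub_self]

theorem cosetSum_single_sub_one_mul_ne_zero {c : G}
    (hc : (periodicPts (c • · : G ⧸ H → G ⧸ H)).Subsingleton) {P : k[G]}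
    (hP : cosetSum H P ≠ 0) (hdeg : (cosetSum H P).degree = 0) :
    cosetSum H ((single c 1 - 1) * P) ≠ 0 := by
  rw [sub_mul, one_mul, map_sub, cosetSum_single_mul]
  exact sub_ne_zero.mpr
    (Finsupp.mapDomain_ne_of_periodicPts_subsingleton (MulAction.injective c) hc hP hdeg)

end MonoidAlgebra

namespace FreeGroup

variable {X : Type*}

def genConjugates (X : Type*) : Set (FreeGroup X) :=
  {w | ∃ (γ : FreeGroup X) (x : X), w = γ * of x * γ⁻¹}

def expSum : FreeGroup X →* Multiplicative ℤ :=
  FreeGroup.lift fun _ => .ofAdd 1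

variable {g y z : FreeGroup X}

theorem expSum_of_mem_genConjugates (hy : y ∈ genConjugates X) : expSum y = .ofAdd 1 := by
  obtain ⟨γ, x, rfl⟩ := hy
  simp [expSum]

theorem eq_zpow_expSum_of_mem_zpowers (hy : y ∈ genConjugates X) (hg : g ∈ Subgroup.zpowers y) :
    g = y ^ (expSum g).toAdd := by
  obtain ⟨m, rfl⟩ := Subgroup.mem_zpowers_iff.mp hg
  simp [expSum_of_mem_genConjugates hy]

theorem eq_of_mem_zpowers (hy : y ∈ genConjugates X) (hz : z ∈ genConjugates X)
    (h : z ∈ Subgroup.zpowers y) : z = y := by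
  simpa [expSum_of_mem_genConjugates hz] using eq_zpow_expSum_of_mem_zpowers hy h

theorem not_isOfFinOrder_of_mem_genConjugates (hy : y ∈ genConjugates X) : ¬IsOfFinOrder y := by
  rw [isOfFinOrder_iff_pow_eq_one]
  rintro ⟨n, hn, hpow⟩
  have := congrArg (fun g => (expSum g).toAdd) hpow
  simp [expSum_of_mem_genConjugates hy] at this
  omega

theorem toWord_mul_of_mul_inv [DecidableEq X] {x : X}
    (hg : ∀ p ∈ g.toWord.getLast?, p.1 ≠ x) :
    (g * of x * g⁻¹).toWord = g.toWord ++ (x, true) :: invRev g.toWord := by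
  have hleft : IsReduced (g.toWord ++ [(x, true)]) :=
    List.isChain_append.mpr ⟨isReduced_toWord, .singleton _, fun p hp q hq h => by
      cases hq; exact absurd h (hg p hp)⟩
  have hright : IsReduced ([(x, true)] ++ invRev g.toWord) := by
    refine List.isChain_append.mpr ⟨.singleton _, ?_, fun p hp q hq h => ?_⟩
    · have := isReduced_toWord (x := g⁻¹)
      rwa [toWord_inv] at this
    · cases hp
      simp only [invRev, List.head?_reverse, List.getLast?_map, Option.mem_def,
        Option.map_eq_some_iff] at hq
      obtain ⟨p, hp, rfl⟩ := hq
      exact absurd h.symm (hg p hp)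
  have hmk : g * of x * g⁻¹ = mk (g.toWord ++ (x, true) :: invRev g.toWord) := by
    conv_lhs => rw [← mk_toWord (x := g)]
    rw [inv_mk, of, mul_mk, mul_mk, List.append_assoc, List.singleton_append]
  rw [hmk, toWord_mk, IsReduced.reduce_eq]
  simpa using hleft.append_overlap hright (List.cons_ne_nil _ _)

theorem mk_singleton_mem_zpowers_of (x : X) (b : Bool) :
    mk [(x, b)] ∈ Subgroup.zpowers (of x) := by
  cases b
  · have : mk [(x, false)] = (of x)⁻¹ := by simp [of, inv_mk, invRev]
    exact this ▸ inv_mem (Subgroup.mem_zpowers _)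
  · exact Subgroup.mem_zpowers _

theorem mem_zpowers_of_commute_of {x : X} (h : Commute g (of x)) :
    g ∈ Subgroup.zpowers (of x) := by
  classical
  induction hw : g.toWord using List.reverseRecOn generalizing g with
  | nil => rw [toWord_eq_nil_iff.mp hw]; exact one_mem _
  | append_singleton w p ih =>
    have hred : IsReduced (w ++ [p]) := hw ▸ isReduced_toWord
    have hg : g = mk w * mk [p] := by rw [mul_mk, ← hw, mk_toWord]
    by_cases hpx : p.1 = x
    · obtain ⟨x', b⟩ := p
      obtain rfl : x' = x := hpx
      have hp := mk_singleton_mem_zpowers_of x' b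
      obtain ⟨k, hk⟩ := Subgroup.mem_zpowers_iff.mp hp
      have hcomm : Commute (mk w) (of x') := by
        rw [eq_mul_inv_of_mul_eq hg.symm, ← hk]
        exact h.mul_left ((Commute.refl _).zpow_left k).inv_left
      have hw' : (mk w).toWord = w := by
        rw [toWord_mk, (hred.infix (List.prefix_append _ _).isInfix).reduce_eq]
      rw [hg]
      exact mul_mem (ih hcomm hw') hp
    · have hconj := toWord_mul_of_mul_inv (g := g) (x := x) (by simpa [hw] using hpx)
      rw [h.eq, mul_inv_cancel_right, toWord_of] at hconj
      have := congrArg List.length hconj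
      simp [hw] at this
      omega

theorem mem_zpowers_of_commute (hy : y ∈ genConjugates X) (h : Commute g y) :
    g ∈ Subgroup.zpowers y := by
  obtain ⟨γ, x, rfl⟩ := hy
  have hcomm : Commute (γ⁻¹ * g * γ) (of x) := by
    simpa [mul_assoc] using h.map (MulAut.conj γ⁻¹)
  obtain ⟨k, hk⟩ := Subgroup.mem_zpowers_iff.mp (mem_zpowers_of_commute_of hcomm)
  refine Subgroup.mem_zpowers_iff.mpr ⟨k, ?_⟩
  rw [conj_zpow, hk]
  group

variable {a c : FreeGroup X}

theorem conj_eq_of_mem_periodicPts (ha : a ∈ genConjugates X) (hc : c ∈ genConjugates X)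
    (hg : (g : FreeGroup X ⧸ Subgroup.zpowers a) ∈ periodicPts (c • ·)) :
    g⁻¹ * c * g = a := by
  obtain ⟨n, hn, hper⟩ := hg
  rw [IsPeriodicPt, IsFixedPt, smul_iterate] at hper
  dsimp only at hper
  rw [MulAction.Quotient.smul_coe, eq_comm, QuotientGroup.eq] at hper
  have hpow := eq_zpow_expSum_of_mem_zpowers ha hper
  simp [expSum_of_mem_genConjugates hc] at hpow
  rw [← pow_left_inj hn.ne', ← hpow, ← mul_assoc]
  simpa using conj_pow (a := g⁻¹) (b := c) (i := n)

theorem periodicPts_smul_subsingleton (ha : a ∈ genConjugates X) (hc : c ∈ genConjugates X) :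
    (periodicPts (c • · : FreeGroup X ⧸ Subgroup.zpowers a → _)).Subsingleton := by
  rintro ⟨g₁⟩ hg₁ ⟨g₂⟩ hg₂
  have h₁ := conj_eq_of_mem_periodicPts ha hc hg₁
  have h₂ := conj_eq_of_mem_periodicPts ha hc hg₂
  refine QuotientGroup.eq.mpr (mem_zpowers_of_commute ha ?_)
  have : g₁⁻¹ * g₂ * (g₂⁻¹ * c * g₂) = g₁⁻¹ * c * g₁ * (g₁⁻¹ * g₂) := by group
  rwa [h₁, h₂] at this

open MonoidAlgebra

noncomputable def nu (X : Type*) :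
    FreeMonoid (genConjugates X) →* MonoidAlgebra ℤ (FreeGroup X) :=
  FreeMonoid.lift fun y => MonoidAlgebra.of ℤ (FreeGroup X) y - 1

theorem nu_of (y : genConjugates X) : nu X (.of y) = single (y : FreeGroup X) 1 - 1 := rfl

theorem nu_mul_of (w : FreeMonoid (genConjugates X)) (y : genConjugates X) :
    nu X (w * .of y) = nu X w * (single (y : FreeGroup X) 1 - 1) := by
  rw [(nu X).map_mul, nu_of]

theorem cosetSum_nu_mul_ne_zero {a : FreeGroup X} (ha : a ∈ genConjugates X)
    (w : FreeMonoid (genConjugates X)) {P : MonoidAlgebra ℤ (FreeGroup X)}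
    (hP : cosetSum (Subgroup.zpowers a) P ≠ 0)
    (hdeg : (cosetSum (Subgroup.zpowers a) P).degree = 0) :
    cosetSum (Subgroup.zpowers a) (nu X w * P) ≠ 0 := by
  have hdeg' (w : FreeMonoid (genConjugates X)) :
      (cosetSum (Subgroup.zpowers a) (nu X w * P)).degree = 0 := by
    cases w with
    | one => rwa [(nu X).map_one, one_mul]
    | of_mul c w => rw [(nu X).map_mul, nu_of, mul_assoc, degree_cosetSum_single_sub_one_mul]
  induction w using FreeMonoid.inductionOn' with
  | one => rwa [(nu X).map_one, one_mul]
  | of_mul c w ih =>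
    rw [(nu X).map_mul, nu_of, mul_assoc]
    exact cosetSum_single_sub_one_mul_ne_zero (periodicPts_smul_subsingleton ha c.2) ih (hdeg' w)

theorem cosetSum_nu_mul_sub_one_ne_zero {a b : FreeGroup X} (ha : a ∈ genConjugates X)
    (hb : b ∈ genConjugates X) (hba : b ≠ a) (w : FreeMonoid (genConjugates X)) :
    cosetSum (Subgroup.zpowers a) (nu X w * (single b 1 - 1)) ≠ 0 := by
  have hcoset : (b : FreeGroup X ⧸ Subgroup.zpowers a) ≠ (1 : FreeGroup X) := fun h =>
    hba (eq_of_mem_zpowers ha hb (by simpa using inv_mem (QuotientGroup.eq.mp h)))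
  refine cosetSum_nu_mul_ne_zero ha w ?_ ?_
  · rw [map_sub, cosetSum_single, one_def, cosetSum_single]
    exact sub_ne_zero.mpr ((Finsupp.single_left_injective one_ne_zero).ne hcoset)
  · rw [map_sub, cosetSum_single, one_def, cosetSum_single, map_sub, Finsupp.degree_single,
      Finsupp.degree_single, sub_self]

theorem nu_mul_of_ne_one (w : FreeMonoid (genConjugates X)) (y : genConjugates X) :
    nu X (w * .of y) ≠ 1 := by
  intro h
  have := congrArg (cosetSum (Subgroup.zpowers (y : FreeGroup X))) h
  rw [nu_mul_of, cosetSum_mul_single_sub_one_of_mem _ (Subgroup.mem_zpowers _), one_def,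
    cosetSum_single] at this
  exact Finsupp.single_ne_zero.mpr one_ne_zero this.symm

theorem eq_of_nu_mul_of_eq {w₁ w₂ : FreeMonoid (genConjugates X)} {a b : genConjugates X}
    (h : nu X (w₁ * .of a) = nu X (w₂ * .of b)) : a = b := by
  by_contra hab
  have := congrArg (cosetSum (Subgroup.zpowers (a : FreeGroup X))) h
  rw [nu_mul_of, nu_mul_of, cosetSum_mul_single_sub_one_of_mem _ (Subgroup.mem_zpowers _)] at this
  exact cosetSum_nu_mul_sub_one_ne_zero a.2 b.2 (fun h => hab (Subtype.ext h).symm) w₂ this.symm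

theorem nu_injective : Injective (nu X) := by
  intro w₁ w₂ h
  induction w₁ using FreeMonoid.inductionOn_mul_of generalizing w₂ with
  | one =>
    induction w₂ using FreeMonoid.inductionOn_mul_of with
    | one => rfl
    | mul_of w₂ b _ => exact absurd h.symm (nu_mul_of_ne_one w₂ b)
  | mul_of w₁ a ih =>
    induction w₂ using FreeMonoid.inductionOn_mul_of with
    | one => exact absurd h (nu_mul_of_ne_one w₁ a)
    | mul_of w₂ b _ =>
      obtain rfl := eq_of_nu_mul_of_eq h
      rw [nu_mul_of, nu_mul_of] at h
      rw [ih ((isRightRegular_single_sub_one (not_isOfFinOrder_of_mem_genConjugates a.2)) h)]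

end FreeGroup

/-- Let `F(X)` be a free group, `Y` the set of conjugates of the generators, and
`ν : F⁺(Y) → ℤ[F(X)]` the monoid homomorphism with `ν(y) = y - 1`. Then `ν` is injective. -/
theorem free_monoid_nu_injective (X : Type*) :
    Function.Injective
      (FreeMonoid.lift
        (fun y : {w : FreeGroup X // ∃ (γ : FreeGroup X) (x : X),
            w = γ * FreeGroup.of x * γ⁻¹} =>
          MonoidAlgebra.of ℤ (FreeGroup X) y.1 - 1)) :=
  FreeGroup.nu_injective
end

section
/- Let F(X) be a free group freely generated by a set X, let X₀ be a subset of X, and let ρ: F(X) → F(X) be a group automorphism which fixes every element of X₀ and which leaves the subgroup F(X∖X₀) generated by X∖X₀ invariant (i.e. ρ(F(X∖X₀)) ⊆ F(X∖X₀)). Let y_1,…,y_l ∈ {ωx₀ω^{−1} : ω ∈ F(X), x₀ ∈ X₀}. If ρ(y_1y_2⋯y_l) = y_1y_2⋯y_l, then ρ(y_i) = y_i for all i = 1,…,l. -/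
/-!
Let `Φ : F(X) → F(X₀ × F(X)) ⋊ F(X)` send `x₀ ∈ X₀` to the letter `(x₀, 1)` of the left factor
and every other generator to itself in the right factor, `F(X)` acting on the left factor by
`(x₀, w) ↦ (x₀, g w)`; a letter `(x₀, w)` stands for `w x₀ w⁻¹`, which gives a left inverse of `Φ`.
Each `y_i = ω x₀ ω⁻¹` becomes a conjugate of a letter of the left factor, and since `ρ` fixes `X₀`
and preserves `F(X ∖ X₀)`, `Φ` intertwines `ρ` with the map induced by the letter map
`(x₀, w) ↦ (x₀, π (ρ w))`, `π` the retraction onto `F(X ∖ X₀)`. This letter map is injective on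
the letters that occur (those with `w ∈ F(X ∖ X₀)`), and a reduced word fixed by an injective
letter map has all its letters fixed: `Φ(y_1 ⋯ y_l)` lies in the subgroup generated by fixed
letters.

It remains to see that if a product of conjugates of letters lies in the subgroup `F(S)`
generated by a set `S` of letters, so does each factor. Exponent sums force every conjugated
letter into `S`; applying the same `Φ`, now for `S`, turns the factors into conjugates of letters
whose product again lies in a subgroup generated by letters, and strictly shortens every factor not
yet in `F(S)`, so induction on the total length concludes.
-/

open FreeGroup Subgroup SemidirectProduct

universe u

namespace FreeGroup

variable {α β : Type*}

theorem reduce_map_of_injective [DecidableEq α] [DecidableEq β] {f : α → β}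
    (hf : Function.Injective f) (L : List (α × Bool)) :
    reduce (L.map fun c => (f c.1, c.2)) = (reduce L).map fun c => (f c.1, c.2) := by
  induction L with
  | nil => simp
  | cons c L ih =>
    rw [List.map_cons, reduce.cons, reduce.cons, ih]
    cases h : reduce L with
    | nil => simp
    | cons d t =>
      simp only [List.map_cons, hf.eq_iff]
      split_ifs <;> rfl

theorem toWord_map_of_injective [DecidableEq α] [DecidableEq β] {f : α → β}
    (hf : Function.Injective f) (v : FreeGroup α) :
    (map f v).toWord = v.toWord.map fun c => (f c.1, c.2) := by
  conv_lhs => rw [← mk_toWord (x := v)]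
  rw [map.mk, toWord_mk, reduce_map_of_injective hf, reduce_toWord]

theorem norm_map_of_injective [DecidableEq α] [DecidableEq β] {f : α → β}
    (hf : Function.Injective f) (v : FreeGroup α) : norm (map f v) = norm v := by
  rw [norm, toWord_map_of_injective hf, List.length_map, norm]

theorem mem_closure_image_of_iff [DecidableEq α] {T : Set α} {v : FreeGroup α} :
    v ∈ closure (of '' T) ↔ ∀ c ∈ v.toWord, c.1 ∈ T := by
  constructor
  · rw [← Subtype.range_coe (s := T), ← range_map]
    rintro ⟨w, rfl⟩ c hc
    rw [toWord_map_of_injective Subtype.val_injective] at hc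
    obtain ⟨d, -, rfl⟩ := List.mem_map.1 hc
    exact ⟨d.1, rfl⟩
  · intro h
    have hv : v = (v.toWord.map fun c => cond c.2 (of c.1) (of c.1)⁻¹).prod := by
      rw [← lift_mk, mk_toWord, lift_of_eq_id, MonoidHom.id_apply]
    rw [hv]
    refine list_prod_mem fun _ hx => ?_
    obtain ⟨⟨a, b⟩, hc, rfl⟩ := List.mem_map.1 hx
    have ha : of a ∈ closure (of '' T) := subset_closure ⟨a, h _ hc, rfl⟩
    cases b
    exacts [inv_mem ha, ha]

theorem toWord_fixed_of_map_eq_self [DecidableEq α] {f : α → α} (hf : Function.Injective f)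
    {v : FreeGroup α} (h : map f v = v) : ∀ c ∈ v.toWord, f c.1 = c.1 := by
  have hw := toWord_map_of_injective hf v
  rw [h] at hw
  conv_lhs at hw => rw [← List.map_id v.toWord]
  rw [List.map_eq_map_iff] at hw
  exact fun c hc => congrArg Prod.fst (hw c hc).symm

theorem map_eq_self_of_mem_closure_fixedPoints {f : α → α} {v : FreeGroup α}
    (hv : v ∈ closure (of '' Function.fixedPoints f)) : map f v = v :=
  MonoidHom.eqOn_closure (f := map f) (g := MonoidHom.id _)
    (by rintro _ ⟨a, ha, rfl⟩; exact congrArg of ha) hv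

theorem mem_closure_fixedPoints_of_map_eq_self {f : α → α} {T : Set α} (hinj : Set.InjOn f T)
    (hmaps : Set.MapsTo f T T) {v : FreeGroup α} (hv : v ∈ closure (of '' T))
    (h : map f v = v) : v ∈ closure (of '' Function.fixedPoints f) := by
  classical
  have hf' : Function.Injective (T.piecewise f id) :=
    (Set.injective_piecewise_iff T).2
      ⟨hinj, Set.injOn_id _, fun x hx y hy hxy => hy (show id y ∈ T from hxy ▸ hmaps hx)⟩
  have heq : map (T.piecewise f id) v = map f v :=
    MonoidHom.eqOn_closure (by
      rintro _ ⟨a, ha, rfl⟩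
      simp only [map.of, Set.piecewise_eq_of_mem _ _ _ ha]) hv
  rw [mem_closure_image_of_iff] at hv ⊢
  intro c hc
  have hc' := toWord_fixed_of_map_eq_self hf' (heq.trans h) c hc
  rwa [Set.piecewise_eq_of_mem _ _ _ (hv c hc)] at hc'

section Semidirect

variable (S : Set α)

def shiftAct : FreeGroup α →* MulAut (FreeGroup (S × FreeGroup α)) where
  toFun g := freeGroupCongr ((Equiv.refl S).prodCongr (Equiv.mulLeft g))
  map_one' := MulEquiv.ext fun m => by
    change map _ m = m
    convert map.id' m
    simp
  map_mul' g h := MulEquiv.ext fun m => by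
    change map _ m = map _ (map _ m)
    rw [map.comp]
    congr
    funext p
    simp [Prod.map]

theorem shiftAct_of (g : FreeGroup α) (p : S × FreeGroup α) :
    shiftAct S g (of p) = of (p.1, g * p.2) :=
  map.of

theorem norm_shiftAct [DecidableEq α] (g : FreeGroup α) (m : FreeGroup (S × FreeGroup α)) :
    norm (shiftAct S g m) = norm m :=
  norm_map_of_injective (Equiv.injective _) m

theorem shiftAct_mem_closure {H : Subgroup (FreeGroup α)} {g : FreeGroup α} (hg : g ∈ H)
    {m : FreeGroup (S × FreeGroup α)} (hm : m ∈ closure (of '' {p | p.2 ∈ H})) :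
    shiftAct S g m ∈ closure (of '' {p | p.2 ∈ H}) := by
  have := mem_map_of_mem (shiftAct S g).toMonoidHom hm
  rw [MonoidHom.map_closure, ← Set.image_comp] at this
  refine closure_mono ?_ this
  rintro _ ⟨p, hp, rfl⟩
  exact ⟨_, mul_mem hg hp, (shiftAct_of S g p).symm⟩

abbrev Splitting : Type _ := FreeGroup (S × FreeGroup α) ⋊[shiftAct S] FreeGroup α

noncomputable def toSemidirect : FreeGroup α →* Splitting S := by
  classical
  exact FreeGroup.lift fun x => if h : x ∈ S then inl (of (⟨x, h⟩, 1)) else inr (of x)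

theorem toSemidirect_of_mem {x : α} (hx : x ∈ S) :
    toSemidirect S (of x) = inl (of (⟨x, hx⟩, 1)) := by
  rw [toSemidirect, lift_apply_of, dif_pos hx]

theorem toSemidirect_of_notMem {x : α} (hx : x ∉ S) : toSemidirect S (of x) = inr (of x) := by
  rw [toSemidirect, lift_apply_of, dif_neg hx]

def ofSemidirect : Splitting S →* FreeGroup α :=
  SemidirectProduct.lift (FreeGroup.lift fun p => p.2 * of p.1.1 * p.2⁻¹) (MonoidHom.id _)
    fun g => FreeGroup.ext_hom _ _ fun p => by
      simp [shiftAct_of, mul_assoc]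

theorem ofSemidirect_toSemidirect (v : FreeGroup α) : ofSemidirect S (toSemidirect S v) = v := by
  suffices (ofSemidirect S).comp (toSemidirect S) = MonoidHom.id _ from DFunLike.congr_fun this v
  refine FreeGroup.ext_hom _ _ fun x => ?_
  by_cases hx : x ∈ S
  · simp [toSemidirect_of_mem S hx, ofSemidirect]
  · simp [toSemidirect_of_notMem S hx, ofSemidirect]

theorem toSemidirect_injective : Function.Injective (toSemidirect S) :=
  Function.LeftInverse.injective (ofSemidirect_toSemidirect S)

theorem toSemidirect_conj_of {x : α} (hx : x ∈ S) (ω : FreeGroup α) :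
    toSemidirect S (ω * of x * ω⁻¹) =
      inl ((toSemidirect S ω).left * of (⟨x, hx⟩, (toSemidirect S ω).right) *
        (toSemidirect S ω).left⁻¹) := by
  rw [_root_.map_mul, _root_.map_mul, _root_.map_inv, toSemidirect_of_mem S hx]
  ext <;> simp [shiftAct_of]

theorem toSemidirect_eq_inr {w : FreeGroup α} (hw : w ∈ closure (of '' Sᶜ)) :
    toSemidirect S w = inr w :=
  MonoidHom.eqOn_closure (f := toSemidirect S) (g := inr)
    (by rintro _ ⟨x, hx, rfl⟩; exact toSemidirect_of_notMem S hx) hw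

theorem toSemidirect_mem_of_mem_closure {T : Set α} {H : Subgroup (FreeGroup α)}
    (hT : ∀ x ∈ T, x ∉ S → of x ∈ H) {v : FreeGroup α} (hv : v ∈ closure (of '' T)) :
    (toSemidirect S v).right ∈ H ∧
      (toSemidirect S v).left ∈ closure (of '' {p | p.2 ∈ H}) := by
  induction hv using closure_induction with
  | mem _ hv =>
    obtain ⟨x, hxT, rfl⟩ := hv
    by_cases hx : x ∈ S
    · rw [toSemidirect_of_mem S hx]
      exact ⟨one_mem H, subset_closure ⟨_, one_mem H, rfl⟩⟩
    · rw [toSemidirect_of_notMem S hx]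
      exact ⟨hT x hxT hx, one_mem _⟩
  | one => exact ⟨one_mem H, one_mem _⟩
  | mul a b _ _ ha hb =>
    rw [_root_.map_mul, mul_left, mul_right]
    exact ⟨mul_mem ha.1 hb.1, mul_mem ha.2 (shiftAct_mem_closure S ha.1 hb.2)⟩
  | inv a _ ha =>
    rw [_root_.map_inv, inv_left, inv_right]
    exact ⟨inv_mem ha.1, shiftAct_mem_closure S (inv_mem ha.1) (inv_mem ha.2)⟩

theorem ofSemidirect_inl_mem_closure {m : FreeGroup (S × FreeGroup α)}
    (hm : m ∈ closure (of '' {p | p.2 ∈ closure (of '' S)})) :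
    ofSemidirect S (inl m) ∈ closure (of '' S) := by
  have := mem_map_of_mem ((ofSemidirect S).comp inl) hm
  rw [MonoidHom.map_closure] at this
  refine (closure_le _).2 ?_ this
  rintro _ ⟨_, ⟨p, hp, rfl⟩, rfl⟩
  simp only [ofSemidirect, MonoidHom.comp_apply, lift_inl, lift_apply_of]
  exact mul_mem (mul_mem hp (subset_closure ⟨_, p.1.2, rfl⟩)) (inv_mem hp)

theorem norm_left_toSemidirect_mk_le [DecidableEq α] [DecidablePred (· ∈ S)]
    (L : List (α × Bool)) : norm (toSemidirect S (mk L)).left ≤ L.countP (·.1 ∈ S) := by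
  induction L with
  | nil => simp [← one_eq_mk]
  | cons c L ih =>
    have hsplit : mk (c :: L) = cond c.2 (of c.1) (of c.1)⁻¹ * mk L := by
      have hc : cond c.2 (of c.1) (of c.1)⁻¹ = mk [c] := by obtain ⟨x, _ | _⟩ := c <;> rfl
      rw [hc, mul_mk]
      rfl
    have hc : norm (toSemidirect S (cond c.2 (of c.1) (of c.1)⁻¹)).left ≤
        if c.1 ∈ S then 1 else 0 := by
      obtain ⟨x, _ | _⟩ := c <;> by_cases hx : x ∈ S <;>
        simp [hx, toSemidirect_of_mem, toSemidirect_of_notMem]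
    rw [hsplit, _root_.map_mul, mul_left, List.countP_cons]
    refine (norm_mul_le _ _).trans ?_
    rw [norm_shiftAct]
    simp only [decide_eq_true_eq]
    split_ifs at hc ⊢ <;> omega

theorem norm_left_toSemidirect_le [DecidableEq α] (v : FreeGroup α) :
    norm (toSemidirect S v).left ≤ norm v := by
  classical
  rw [← mk_toWord (x := v)]
  exact (norm_left_toSemidirect_mk_le S _).trans (List.countP_le_length.trans (by simp [norm]))

theorem norm_left_toSemidirect_lt [DecidableEq α] {v : FreeGroup α}
    (hv : v ∉ closure (of '' S)) : norm (toSemidirect S v).left < norm v := by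
  classical
  rw [mem_closure_image_of_iff] at hv
  rw [← mk_toWord (x := v)]
  refine (norm_left_toSemidirect_mk_le S _).trans_lt ?_
  rw [mk_toWord, norm]
  push Not at hv
  obtain ⟨c, hc, hcS⟩ := hv
  exact List.countP_lt_length_iff.2 ⟨c, hc, by simpa using hcS⟩

end Semidirect

theorem mem_of_prod_conj_mem_closure {S : Set α} {l : ℕ}
    (ω : Fin l → FreeGroup α) (b : Fin l → α)
    (h : (List.ofFn fun s => ω s * of (b s) * (ω s)⁻¹).prod ∈ closure (of '' S))
    (s : Fin l) : b s ∈ S := by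
  classical
  by_contra hbs
  let e : FreeGroup α →* Multiplicative ℤ :=
    FreeGroup.lift fun x => if x = b s then Multiplicative.ofAdd 1 else 1
  have hker : closure (of '' S) ≤ e.ker := by
    rw [closure_le]
    rintro _ ⟨x, hx, rfl⟩
    simp [e, show x ≠ b s by rintro rfl; exact hbs hx]
  have hcount : Multiplicative.toAdd (e (List.ofFn fun s => ω s * of (b s) * (ω s)⁻¹).prod) =
      ∑ s', if b s' = b s then 1 else 0 := by
    simp [e, map_list_prod, List.prod_ofFn, mul_comm, apply_ite Multiplicative.toAdd]
  rw [hker h, toAdd_one] at hcount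
  have hs : (1 : ℤ) ≤ ∑ s', if b s' = b s then 1 else 0 := by
    simpa using Finset.single_le_sum (f := fun s' => if b s' = b s then (1 : ℤ) else 0)
      (fun _ _ => by positivity) (Finset.mem_univ s)
  omega

theorem conj_mem_closure_of_prod_mem_closure {α : Type u} {S : Set α} {l : ℕ}
    (ω : Fin l → FreeGroup α) (b : Fin l → α)
    (h : (List.ofFn fun s => ω s * of (b s) * (ω s)⁻¹).prod ∈ closure (of '' S))
    (t : Fin l) :
    ω t * of (b t) * (ω t)⁻¹ ∈ closure (of '' S) := by
  classical
  suffices key : ∀ (n : ℕ) {β : Type u} [DecidableEq β] (S : Set β) {l : ℕ}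
      (ω : Fin l → FreeGroup β) (b : Fin l → β),
      ∑ s, norm (ω s * of (b s) * (ω s)⁻¹) ≤ n →
      (List.ofFn fun s => ω s * of (b s) * (ω s)⁻¹).prod ∈ closure (of '' S) →
      ∀ t, ω t * of (b t) * (ω t)⁻¹ ∈ closure (of '' S) from key _ S ω b le_rfl h t
  intro n
  induction n using Nat.strong_induction_on with
  | _ n ih =>
  intro β _ S l ω b hn h t
  set y := fun s => ω s * of (b s) * (ω s)⁻¹
  by_cases hall : ∀ s, y s ∈ closure (of '' S)
  · exact hall t
  push Not at hall
  obtain ⟨t₀, ht₀⟩ := hall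
  have hb := mem_of_prod_conj_mem_closure ω b h
  set ω' := fun s => (toSemidirect S (ω s)).left
  set b' : Fin l → S × FreeGroup β := fun s => (⟨b s, hb s⟩, (toSemidirect S (ω s)).right)
  set γ := fun s => ω' s * of (b' s) * (ω' s)⁻¹
  have hΦ : ∀ s, toSemidirect S (y s) = inl (γ s) :=
    fun s => toSemidirect_conj_of S (hb s) (ω s)
  have hγ_le : ∀ s, norm (γ s) ≤ norm (y s) := fun s => by
    simpa [hΦ] using norm_left_toSemidirect_le S (y s)
  have hγ_lt : norm (γ t₀) < norm (y t₀) := by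
    simpa [hΦ] using norm_left_toSemidirect_lt S ht₀
  have hΦprod : toSemidirect S (List.ofFn y).prod = inl (List.ofFn γ).prod := by
    simp only [map_list_prod, List.map_ofFn, Function.comp_def, hΦ]
  have hprod := (toSemidirect_mem_of_mem_closure S (H := closure (of '' S))
    (fun x hx hxS => absurd hx hxS) h).2
  rw [hΦprod, left_inl] at hprod
  have hsum : ∑ s, norm (γ s) < n :=
    (Finset.sum_lt_sum (fun s _ => hγ_le s) ⟨t₀, Finset.mem_univ _, hγ_lt⟩).trans_le hn
  change y t ∈ _
  rw [← ofSemidirect_toSemidirect S (y t), hΦ]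
  exact ofSemidirect_inl_mem_closure S (ih _ hsum _ ω' b' le_rfl hprod t)

section Endomorphism

variable (S : Set α)

theorem toSemidirect_mem_closure_compl (v : FreeGroup α) :
    (toSemidirect S v).right ∈ closure (of '' Sᶜ) ∧
      (toSemidirect S v).left ∈ closure (of '' {p | p.2 ∈ closure (of '' Sᶜ)}) :=
  toSemidirect_mem_of_mem_closure S (T := Set.univ) (H := closure (of '' Sᶜ))
    (fun x _ hx => Subgroup.subset_closure ⟨x, hx, rfl⟩)
    (by rw [Set.image_univ, closure_range_of]; trivial)

noncomputable def retractCompl : FreeGroup α →* FreeGroup α :=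
  rightHom.comp (toSemidirect S)

theorem retractCompl_mem_closure (v : FreeGroup α) : retractCompl S v ∈ closure (of '' Sᶜ) :=
  (toSemidirect_mem_closure_compl S v).1

theorem retractCompl_eq_self {w : FreeGroup α} (hw : w ∈ closure (of '' Sᶜ)) :
    retractCompl S w = w := by
  rw [retractCompl, MonoidHom.comp_apply, toSemidirect_eq_inr S hw, rightHom_inr]

def shiftMap (σ : FreeGroup α →* FreeGroup α) : Splitting S →* Splitting S :=
  SemidirectProduct.map (map (Prod.map id σ)) σ fun g => FreeGroup.ext_hom _ _ fun p => by
    simp [shiftAct_of]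

theorem shiftMap_inl (σ : FreeGroup α →* FreeGroup α) (m : FreeGroup (S × FreeGroup α)) :
    shiftMap S σ (inl m) = inl (map (Prod.map id σ) m) :=
  SemidirectProduct.map_inl _ _ _ m

theorem toSemidirect_apply_eq_shiftMap (ρ : FreeGroup α →* FreeGroup α)
    (hfix : ∀ x ∈ S, ρ (of x) = of x)
    (hinv : ∀ w ∈ closure (of '' Sᶜ), ρ w ∈ closure (of '' Sᶜ)) (v : FreeGroup α) :
    toSemidirect S (ρ v) = shiftMap S ((retractCompl S).comp ρ) (toSemidirect S v) := by
  suffices (toSemidirect S).comp ρ = (shiftMap S ((retractCompl S).comp ρ)).comp (toSemidirect S)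
    from DFunLike.congr_fun this v
  refine FreeGroup.ext_hom _ _ fun x => ?_
  by_cases hx : x ∈ S
  · simp [hfix x hx, toSemidirect_of_mem S hx, shiftMap]
  · have hρx := hinv _ (subset_closure ⟨x, hx, rfl⟩)
    simp [toSemidirect_of_notMem S hx, shiftMap, toSemidirect_eq_inr S hρx,
      retractCompl_eq_self S hρx]

theorem injOn_prodMap_retractCompl {ρ : FreeGroup α →* FreeGroup α}
    (hρ : Function.Injective ρ)
    (hinv : ∀ w ∈ closure (of '' Sᶜ), ρ w ∈ closure (of '' Sᶜ)) :
    Set.InjOn (Prod.map id ((retractCompl S).comp ρ) : S × FreeGroup α → S × FreeGroup α)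
      {p | p.2 ∈ closure (of '' Sᶜ)} := by
  rintro ⟨s, w⟩ hw ⟨s', w'⟩ hw' h
  simp only [Prod.map, Prod.mk.injEq, MonoidHom.comp_apply,
    retractCompl_eq_self S (hinv _ hw), retractCompl_eq_self S (hinv _ hw')] at h
  exact Prod.ext h.1 (hρ h.2)

theorem mapsTo_prodMap_retractCompl (σ : FreeGroup α →* FreeGroup α) :
    Set.MapsTo (Prod.map id ((retractCompl S).comp σ) : S × FreeGroup α → S × FreeGroup α)
      Set.univ {p | p.2 ∈ closure (of '' Sᶜ)} :=
  fun _ _ => retractCompl_mem_closure S _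

end Endomorphism

end FreeGroup

/-- Let `ρ` be an automorphism of the free group `F(X)` fixing every element of `X₀ ⊆ X`
and leaving `F(X ∖ X₀)` invariant. If `y_1, …, y_l` are conjugates of elements of `X₀` and
`ρ(y_1 ⋯ y_l) = y_1 ⋯ y_l`, then `ρ(y_i) = y_i` for all `i`. -/
theorem auto_fixes_factors {X : Type*} (X₀ : Set X) (ρ : FreeGroup X ≃* FreeGroup X)
    (hfix : ∀ x ∈ X₀, ρ (FreeGroup.of x) = FreeGroup.of x)
    (hinv : ∀ w ∈ Subgroup.closure (FreeGroup.of '' X₀ᶜ),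
      ρ w ∈ Subgroup.closure (FreeGroup.of '' X₀ᶜ))
    (l : ℕ) (y : Fin l → FreeGroup X)
    (hy : ∀ t, ∃ (ω : FreeGroup X) (x₀ : X), x₀ ∈ X₀ ∧ y t = ω * FreeGroup.of x₀ * ω⁻¹)
    (hprod : ρ ((List.ofFn y).prod) = (List.ofFn y).prod) :
    ∀ t, ρ (y t) = y t := by
  choose ω x₀ hx₀ hy using hy
  set σ := (retractCompl X₀).comp ρ.toMonoidHom
  set ω' := fun t => (toSemidirect X₀ (ω t)).left
  set b' : Fin l → X₀ × FreeGroup X :=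
    fun t => (⟨x₀ t, hx₀ t⟩, (toSemidirect X₀ (ω t)).right)
  set γ := fun t => ω' t * of (b' t) * (ω' t)⁻¹
  have hΦ : ∀ t, toSemidirect X₀ (y t) = inl (γ t) := fun t => by
    rw [hy t]; exact toSemidirect_conj_of X₀ (hx₀ t) (ω t)
  have hΦprod : toSemidirect X₀ (List.ofFn y).prod = inl (List.ofFn γ).prod := by
    simp only [map_list_prod, List.map_ofFn, Function.comp_def, hΦ]
  have hρΦ : ∀ v, toSemidirect X₀ (ρ v) = shiftMap X₀ σ (toSemidirect X₀ v) :=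
    toSemidirect_apply_eq_shiftMap X₀ ρ.toMonoidHom hfix hinv
  have hfixed : map (Prod.map id σ) (List.ofFn γ).prod = (List.ofFn γ).prod := by
    have := hρΦ (List.ofFn y).prod
    rw [hprod, hΦprod, shiftMap_inl] at this
    exact inl_injective this.symm
  have hmem := (toSemidirect_mem_closure_compl X₀ (List.ofFn y).prod).2
  rw [hΦprod, left_inl] at hmem
  have hγ := conj_mem_closure_of_prod_mem_closure ω' b' (mem_closure_fixedPoints_of_map_eq_self
    (injOn_prodMap_retractCompl X₀ ρ.injective hinv)
    ((mapsTo_prodMap_retractCompl X₀ _).mono_left (Set.subset_univ _)) hmem hfixed)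
  intro t
  apply toSemidirect_injective X₀
  rw [hρΦ, hΦ, shiftMap_inl, map_eq_self_of_mem_closure_fixedPoints (hγ t)]
end
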